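/- Convergence of the rescaled counting measures: letting μ_n := Σ_{x∈V_n} δ_x denote the counting measure on the vertex set V_n (placing mass one on each vertex), there exists a constant c_μ ∈ (0,∞) such that the finite measures c_μ^{-1} N^{-n} μ_n on ℝ^d converge weakly, as n → ∞, to the self-similar probability measure μ on F. -/

import Mathlib

/-!
By the nesting axiom the first-level copies `ψ_i(V_n)` of `V_n` overlap only inside `V_1`, so
`∑_{V_{n+1}} f` differs from `∑_i ∑_{V_n} f ∘ ψ_i` by at most `(N - 1) |V_1| ‖f‖`. Writing
`a_n(f) = N⁻ⁿ ∑_{V_n} f` and `T f = N⁻¹ ∑_i f ∘ ψ_i`, these errors telescope to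
`|a_{k+m}(f) - a_k(Tᵐ f)| ≤ N⁻ᵏ |V_1| ‖f‖`. Since the `ψ_i` contract and `μ` is `T`-invariant,
`Tᵐ f → ∫ f dμ` uniformly on `F`, hence `a_{k+m}(f) ≈ a_k(1) ∫ f dμ`. Finally `a_n(1) = N⁻ⁿ |V_n|`
decreases to some `c`, and `c ≥ N⁻ⁿ (|V_n| - |V_1|) > 0` as soon as `|V_n| > |V_1|`.
-/

open Finset Filter MeasureTheory
open scoped ENNReal RealInnerProductSpace BigOperators Classical

noncomputable section

variable {d N : ℕ}

/-- The composition `ψ_{i₁} ∘ ⋯ ∘ ψ_{iₙ}` along a word `w = (i₁, …, iₙ)`. -/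
def psiWord (ψ : Fin N → EuclideanSpace ℝ (Fin d) → EuclideanSpace ℝ (Fin d)) :
    List (Fin N) → EuclideanSpace ℝ (Fin d) → EuclideanSpace ℝ (Fin d)
  | [] => id
  | i :: w => ψ i ∘ psiWord ψ w

/-- The set of fixed points of the maps `ψ_i`. -/
def fixPts (ψ : Fin N → EuclideanSpace ℝ (Fin d) → EuclideanSpace ℝ (Fin d)) :
    Set (EuclideanSpace ℝ (Fin d)) :=
  {x | ∃ i, ψ i x = x}

/-- The set `V_0` of essential fixed points: fixed points `x` such that `ψ_i(x) = ψ_j(y)` for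
some `i ≠ j` and some fixed point `y`. -/
def essFixPts (ψ : Fin N → EuclideanSpace ℝ (Fin d) → EuclideanSpace ℝ (Fin d)) :
    Set (EuclideanSpace ℝ (Fin d)) :=
  {x | x ∈ fixPts ψ ∧ ∃ i j, i ≠ j ∧ ∃ y ∈ fixPts ψ, ψ i x = ψ j y}

/-- The vertex sets `V_n`: `V_0` is the set of essential fixed points and
`V_{n+1} = ⋃_i ψ_i(V_n)`. -/
def Vseq (ψ : Fin N → EuclideanSpace ℝ (Fin d) → EuclideanSpace ℝ (Fin d)) :
    ℕ → Set (EuclideanSpace ℝ (Fin d))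
  | 0 => essFixPts ψ
  | n + 1 => ⋃ i, ψ i '' Vseq ψ n

/-- An `n`-cell is a set of the form `ψ_w(V_0)` for a word `w` of length `n`. -/
def IsCell (ψ : Fin N → EuclideanSpace ℝ (Fin d) → EuclideanSpace ℝ (Fin d)) (n : ℕ)
    (C : Set (EuclideanSpace ℝ (Fin d))) : Prop :=
  ∃ w : List (Fin N), w.length = n ∧ C = psiWord ψ w '' essFixPts ψ

/-- The signed distance-like quantity determining on which side of the hyperplane `H_{xy}`
perpendicularly bisecting `x` and `y` a point `z` lies (`z ∈ H_{xy}` iff it vanishes). -/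
def sideVal (x y z : EuclideanSpace ℝ (Fin d)) : ℝ :=
  ⟪z - midpoint ℝ x y, y - x⟫

/-- Reflection `U_{xy}` in the hyperplane perpendicularly bisecting `x` and `y`. -/
def reflectPB (x y z : EuclideanSpace ℝ (Fin d)) : EuclideanSpace ℝ (Fin d) :=
  z - ((2 * sideVal x y z) / ⟪y - x, y - x⟫) • (y - x)

/-- The axioms of a nested fractal (Lindstrøm): `(ψ_i)` is a family of contracting similitudes
with ratio `β⁻¹`, `F` is the associated attractor, `|V_0| ≥ 2`, and the open set condition,
connectivity, symmetry and nesting axioms hold. -/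
structure IsNestedFractal (β : ℝ)
    (ψ : Fin N → EuclideanSpace ℝ (Fin d) → EuclideanSpace ℝ (Fin d))
    (F : Set (EuclideanSpace ℝ (Fin d))) : Prop where
  beta_gt_one : 1 < β
  similitude : ∀ i, ∃ U : EuclideanSpace ℝ (Fin d) ≃ₗᵢ[ℝ] EuclideanSpace ℝ (Fin d),
    ∃ γ : EuclideanSpace ℝ (Fin d), ∀ x, ψ i x = β⁻¹ • U x + γ
  F_nonempty : F.Nonempty
  F_compact : IsCompact F
  F_invariant : F = ⋃ i, ψ i '' F
  v0_nontrivial : (essFixPts ψ).Nontrivial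
  open_set_condition : ∃ W : Set (EuclideanSpace ℝ (Fin d)), W.Nonempty ∧ IsOpen W ∧
    Bornology.IsBounded W ∧ (Pairwise fun i j => Disjoint (ψ i '' W) (ψ j '' W)) ∧
    (⋃ i, ψ i '' W) ⊆ W
  connectivity : ∀ i i' : Fin N, ∃ (n : ℕ) (seq : ℕ → Fin N), seq 0 = i ∧ seq n = i' ∧
    ∀ k < n, ((ψ (seq k) '' essFixPts ψ) ∩ (ψ (seq (k + 1)) '' essFixPts ψ)).Nonempty
  symmetry : ∀ x ∈ essFixPts ψ, ∀ y ∈ essFixPts ψ, x ≠ y →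
    ∀ (n : ℕ) (C : Set (EuclideanSpace ℝ (Fin d))), IsCell ψ n C →
      IsCell ψ n (reflectPB x y '' C) ∧
        ((∃ a ∈ C, 0 < sideVal x y a) → (∃ b ∈ C, sideVal x y b < 0) →
          reflectPB x y '' C = C)
  nesting : ∀ n : ℕ, 1 ≤ n → ∀ w w' : List (Fin N), w.length = n → w'.length = n → w ≠ w' →
    (psiWord ψ w '' F) ∩ (psiWord ψ w' '' F) =
      (psiWord ψ w '' essFixPts ψ) ∩ (psiWord ψ w' '' essFixPts ψ)

/-- The quadratic form `E_0(f) = (1/2) Σ_{x,y ∈ V_0} q_{x,y} (f(x) - f(y))²` on functions,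
where `V0` is a finite vertex set. -/
def en0 (V0 : Finset (EuclideanSpace ℝ (Fin d)))
    (q : EuclideanSpace ℝ (Fin d) → EuclideanSpace ℝ (Fin d) → ℝ)
    (f : EuclideanSpace ℝ (Fin d) → ℝ) : ℝ :=
  (1 / 2) * ∑ x ∈ V0, ∑ y ∈ V0, q x y * (f x - f y) ^ 2

/-- The renormalised form `Ẽ_0(f) = inf { Σ_{i∈I} E_0(g ∘ ψ_i) : g|_{V_0} = f }` (functions on
`V_1` are represented by functions on `ℝ^d`; `E_0` only depends on values on `V_0`). -/
def en0tilde (ψ : Fin N → EuclideanSpace ℝ (Fin d) → EuclideanSpace ℝ (Fin d))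
    (V0 : Finset (EuclideanSpace ℝ (Fin d)))
    (q : EuclideanSpace ℝ (Fin d) → EuclideanSpace ℝ (Fin d) → ℝ)
    (f : EuclideanSpace ℝ (Fin d) → ℝ) : ℝ :=
  sInf {t | ∃ g : EuclideanSpace ℝ (Fin d) → ℝ,
    (∀ x ∈ V0, g x = f x) ∧ t = ∑ i : Fin N, en0 V0 q (g ∘ ψ i)}

/-- The level-`n` energy `E_n(f) := ρ^n Σ_{w ∈ Iⁿ} E_0(f ∘ ψ_w)`. -/
def enLevel (ψ : Fin N → EuclideanSpace ℝ (Fin d) → EuclideanSpace ℝ (Fin d))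
    (V0 : Finset (EuclideanSpace ℝ (Fin d)))
    (q : EuclideanSpace ℝ (Fin d) → EuclideanSpace ℝ (Fin d) → ℝ) (ρ : ℝ) (n : ℕ)
    (f : EuclideanSpace ℝ (Fin d) → ℝ) : ℝ :=
  ρ ^ n * ∑ w : Fin n → Fin N, en0 V0 q (f ∘ psiWord ψ (List.ofFn w))

/-- The level-`n` effective resistance
`R_n(x,y) := (inf {E_n(f) : f(x) = 1, f(y) = 0})⁻¹` for `x ≠ y`, with `R_n(x,x) := 0`. -/
def resLevel (ψ : Fin N → EuclideanSpace ℝ (Fin d) → EuclideanSpace ℝ (Fin d))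
    (V0 : Finset (EuclideanSpace ℝ (Fin d)))
    (q : EuclideanSpace ℝ (Fin d) → EuclideanSpace ℝ (Fin d) → ℝ) (ρ : ℝ) (n : ℕ)
    (x y : EuclideanSpace ℝ (Fin d)) : ℝ :=
  if x = y then 0
  else (sInf {t | ∃ f : EuclideanSpace ℝ (Fin d) → ℝ,
    f x = 1 ∧ f y = 0 ∧ t = enLevel ψ V0 q ρ n f})⁻¹

end

open Function
open scoped BoundedContinuousFunction NNReal Topology

theorem Finset.abs_sum_sum_sub_sum_biUnion_le {ι α : Type*} [Fintype ι] [Nonempty ι]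
    [DecidableEq α] (A : ι → Finset α) {B : Finset α} (hB : ∀ i j, i ≠ j → A i ∩ A j ⊆ B)
    (f : α → ℝ) :
    |∑ i, ∑ a ∈ A i, f a - ∑ a ∈ univ.biUnion A, f a| ≤
      (Fintype.card ι - 1) * ∑ b ∈ B, |f b| := by
  set U := univ.biUnion A
  set m : α → ℕ := fun a => #{i | a ∈ A i}
  have hsum : ∑ i, ∑ a ∈ A i, f a = ∑ a ∈ U, m a * f a := by
    rw [Finset.sum_comm' (t' := U) (s' := fun a => {i | a ∈ A i})]
    · simp [m]
    · intro i a
      simp only [U, mem_univ, mem_filter, mem_biUnion, true_and]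
      exact ⟨fun h => ⟨h, i, h⟩, And.left⟩
  have hterm : ∀ a ∈ U, |((m a : ℝ) - 1) * f a| ≤
      (Fintype.card ι - 1) * if a ∈ B then |f a| else 0 := by
    intro a ha
    obtain ⟨i, -, hai⟩ := mem_biUnion.mp ha
    have hpos : 1 ≤ m a := card_pos.mpr ⟨i, mem_filter.mpr ⟨mem_univ i, hai⟩⟩
    split_ifs with haB
    · have hle : m a ≤ Fintype.card ι := card_filter_le _ _
      rw [abs_mul]
      gcongr
      rw [abs_of_nonneg (by simpa using hpos)]
      gcongr
    · have hone : m a = 1 := le_antisymm (card_le_one.mpr fun j hj k hk => by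
        by_contra hjk
        exact haB (hB j k hjk (mem_inter.mpr ⟨(mem_filter.mp hj).2, (mem_filter.mp hk).2⟩)))
        hpos
      simp [hone]
  have hcard : (0 : ℝ) ≤ Fintype.card ι - 1 := by
    have : (1 : ℝ) ≤ Fintype.card ι := Nat.one_le_cast.mpr Fintype.card_pos
    linarith
  calc |∑ i, ∑ a ∈ A i, f a - ∑ a ∈ U, f a|
      = |∑ a ∈ U, ((m a : ℝ) - 1) * f a| := by
        rw [hsum, ← sum_sub_distrib]
        simp only [sub_one_mul]
    _ ≤ ∑ a ∈ U, |((m a : ℝ) - 1) * f a| := abs_sum_le_sum_abs _ _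
    _ ≤ ∑ a ∈ U, (Fintype.card ι - 1) * if a ∈ B then |f a| else 0 := sum_le_sum hterm
    _ = (Fintype.card ι - 1) * ∑ a ∈ U ∩ B, |f a| := by rw [← mul_sum, sum_ite_mem]
    _ ≤ (Fintype.card ι - 1) * ∑ b ∈ B, |f b| := mul_le_mul_of_nonneg_left
        (sum_le_sum_of_subset_of_nonneg inter_subset_right fun b _ _ => abs_nonneg (f b)) hcard

theorem integral_sum_dirac_finset {X : Type*} [MeasurableSpace X] [MeasurableSingletonClass X]
    (s : Finset X) (f : X → ℝ) :
    ∫ x, f x ∂(Measure.sum fun x : (s : Set X) => Measure.dirac (x : X)) = ∑ x ∈ s, f x := by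
  rw [Measure.sum_fintype, integral_finsetSum_measure fun _ _ => integrable_dirac enorm_lt_top]
  simp only [integral_dirac]
  exact sum_coe_sort s f

section IFSAverage

variable {X : Type*} [TopologicalSpace X] {N : ℕ}

noncomputable def ifsAverage (ψ : Fin N → C(X, X)) (f : X →ᵇ ℝ) : X →ᵇ ℝ :=
  (N : ℝ)⁻¹ • ∑ i, f.compContinuous (ψ i)

variable {ψ : Fin N → C(X, X)}

@[simp]
theorem ifsAverage_apply (f : X →ᵇ ℝ) (x : X) :
    ifsAverage ψ f x = (N : ℝ)⁻¹ * ∑ i, f (ψ i x) := by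
  simp [ifsAverage]

theorem norm_ifsAverage_le (f : X →ᵇ ℝ) : ‖ifsAverage ψ f‖ ≤ ‖f‖ := by
  calc ‖ifsAverage ψ f‖ ≤ (N : ℝ)⁻¹ * ∑ i, ‖f.compContinuous (ψ i)‖ := by
        rw [ifsAverage, norm_smul, norm_inv, RCLike.norm_natCast]
        gcongr
        exact norm_sum_le _ _
    _ ≤ (N : ℝ)⁻¹ * ∑ _i : Fin N, ‖f‖ := by
        gcongr
        exact BoundedContinuousFunction.norm_compContinuous_le _ _
    _ ≤ ‖f‖ := by
        rw [sum_const, card_univ, Fintype.card_fin, nsmul_eq_mul, ← mul_assoc]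
        rcases Nat.eq_zero_or_pos N with rfl | hN
        · simp
        · rw [inv_mul_cancel₀ (by positivity), one_mul]

theorem integral_ifsAverage [MeasurableSpace X] [BorelSpace X]
    {μ : Measure X} [IsFiniteMeasure μ]
    (hμ : μ = (N : ℝ≥0∞)⁻¹ • ∑ i, μ.map (ψ i)) (f : X →ᵇ ℝ) :
    ∫ x, ifsAverage ψ f x ∂μ = ∫ x, f x ∂μ := by
  have hmeas : ∀ i, Measurable (ψ i) := fun i => (ψ i).continuous.measurable
  calc ∫ x, ifsAverage ψ f x ∂μ = (N : ℝ)⁻¹ * ∑ i, ∫ x, f (ψ i x) ∂μ := by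
        simp only [ifsAverage_apply]
        rw [integral_const_mul, integral_finsetSum _ fun i _ => ?_]
        exact (f.compContinuous (ψ i)).integrable μ
    _ = ∫ x, f x ∂((N : ℝ≥0∞)⁻¹ • ∑ i, μ.map (ψ i)) := by
        rw [integral_smul_measure, integral_finsetSum_measure fun i _ => f.integrable _]
        simp [integral_map (hmeas _).aemeasurable f.continuous.aestronglyMeasurable]
    _ = ∫ x, f x ∂μ := by rw [← hμ]

end IFSAverage

theorem abs_sub_integral_le_of_forall_abs_sub_le {X : Type*} [MeasurableSpace X] {μ : Measure X}
    [IsProbabilityMeasure μ] {F : Set X} (hμF : μ Fᶜ = 0) {g : X → ℝ} (hg : Integrable g μ)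
    {x : X} {ε : ℝ}
    (h : ∀ y ∈ F, |g x - g y| ≤ ε) :
    |g x - ∫ y, g y ∂μ| ≤ ε := by
  have hae : ∀ᵐ y ∂μ, ‖g x - g y‖ ≤ ε := by
    filter_upwards [measure_eq_zero_iff_ae_notMem.mp hμF] with y hy
    exact h y (by simpa using hy)
  have := norm_integral_le_of_norm_le_const hae
  rwa [integral_sub (integrable_const _) hg, integral_const, probReal_univ, one_smul, mul_one,
    Real.norm_eq_abs] at this

section Equidistribution

variable {X : Type*} [MetricSpace X] {N : ℕ} [NeZero N] {ψ : Fin N → C(X, X)}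

theorem abs_ifsAverage_sub_le {f : X →ᵇ ℝ} {u v : X} {ε : ℝ}
    (h : ∀ i, |f (ψ i u) - f (ψ i v)| ≤ ε) :
    |ifsAverage ψ f u - ifsAverage ψ f v| ≤ ε := by
  have hN : (0 : ℝ) < N := by exact_mod_cast Nat.pos_of_neZero N
  rw [ifsAverage_apply, ifsAverage_apply, ← mul_sub, ← sum_sub_distrib, abs_mul,
    abs_of_pos (inv_pos.mpr hN), inv_mul_le_iff₀ hN]
  calc |∑ i, (f (ψ i u) - f (ψ i v))| ≤ ∑ i, |f (ψ i u) - f (ψ i v)| := abs_sum_le_sum_abs _ _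
    _ ≤ ∑ _i : Fin N, ε := sum_le_sum fun i _ => h i
    _ = N * ε := by simp

theorem abs_iterate_ifsAverage_sub_le {K : ℝ≥0} (hψ : ∀ i, LipschitzWith K (ψ i)) {F : Set X}
    (hF : ∀ i, Set.MapsTo (ψ i) F F) {δ ε : ℝ} (m : ℕ) {f : X →ᵇ ℝ}
    (hf : ∀ u ∈ F, ∀ v ∈ F, dist u v ≤ K ^ m * δ → |f u - f v| ≤ ε)
    {u v : X} (hu : u ∈ F) (hv : v ∈ F) (huv : dist u v ≤ δ) :
    |(ifsAverage ψ)^[m] f u - (ifsAverage ψ)^[m] f v| ≤ ε := by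
  induction m generalizing f with
  | zero => simpa using hf u hu v hv (by simpa using huv)
  | succ m ih =>
    rw [iterate_succ_apply]
    refine ih fun u hu v hv huv => abs_ifsAverage_sub_le fun i => hf _ (hF i hu) _ (hF i hv) ?_
    calc dist (ψ i u) (ψ i v) ≤ K * dist u v := (hψ i).dist_le_mul u v
      _ ≤ K * (K ^ m * δ) := by gcongr
      _ = K ^ (m + 1) * δ := by ring

theorem tendstoUniformlyOn_iterate_ifsAverage [MeasurableSpace X] [BorelSpace X] {K : ℝ≥0}
    (hK : K < 1) (hψ : ∀ i, LipschitzWith K (ψ i)) {F : Set X} (hFc : IsCompact F)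
    (hF : ∀ i, Set.MapsTo (ψ i) F F) {μ : Measure X} [IsProbabilityMeasure μ] (hμF : μ Fᶜ = 0)
    (hμ : μ = (N : ℝ≥0∞)⁻¹ • ∑ i, μ.map (ψ i)) (f : X →ᵇ ℝ) :
    TendstoUniformlyOn (fun m => ⇑((ifsAverage ψ)^[m] f)) (fun _ => ∫ x, f x ∂μ) atTop F := by
  have hinv : ∀ m, ∫ x, (ifsAverage ψ)^[m] f x ∂μ = ∫ x, f x ∂μ := by
    intro m
    induction m with
    | zero => rfl
    | succ m ih => rw [iterate_succ_apply', integral_ifsAverage hμ, ih]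
  rw [Metric.tendstoUniformlyOn_iff]
  intro ε hε
  obtain ⟨δ, hδ, hfδ⟩ := Metric.uniformContinuousOn_iff_le.mp
    (hFc.uniformContinuousOn_of_continuous f.continuous.continuousOn) (ε / 2) (half_pos hε)
  have hshrink : Tendsto (fun m => (K : ℝ) ^ m * Metric.diam F) atTop (𝓝 0) := by
    simpa using (tendsto_pow_atTop_nhds_zero_of_lt_one K.coe_nonneg hK).mul_const
      (Metric.diam F)
  filter_upwards [hshrink.eventually (ge_mem_nhds hδ)] with m hm x hx
  have hosc : ∀ y ∈ F, |(ifsAverage ψ)^[m] f x - (ifsAverage ψ)^[m] f y| ≤ ε / 2 :=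
    fun y hy => abs_iterate_ifsAverage_sub_le hψ hF m
      (fun u hu v hv huv => by simpa [Real.dist_eq] using hfδ u hu v hv (huv.trans hm))
      hx hy (Metric.dist_le_diam_of_mem hFc.isBounded hx hy)
  have := abs_sub_integral_le_of_forall_abs_sub_le hμF (((ifsAverage ψ)^[m] f).integrable μ) hosc
  rw [hinv, abs_sub_comm] at this
  rw [Real.dist_eq]
  linarith

end Equidistribution

theorem Vseq_mono {d N : ℕ} (ψ : Fin N → EuclideanSpace ℝ (Fin d) → EuclideanSpace ℝ (Fin d)) :
    Monotone (Vseq ψ) := by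
  refine monotone_nat_of_le_succ fun n => ?_
  induction n with
  | zero =>
    intro x hx
    obtain ⟨i, hi⟩ := hx.1
    exact Set.mem_iUnion.mpr ⟨i, x, hx, hi⟩
  | succ n ih => exact Set.iUnion_mono fun i => Set.image_mono ih

namespace IsNestedFractal

variable {d N : ℕ} {β : ℝ} {ψ : Fin N → EuclideanSpace ℝ (Fin d) → EuclideanSpace ℝ (Fin d)}
  {F : Set (EuclideanSpace ℝ (Fin d))} (hnf : IsNestedFractal β ψ F)

local notation "E" => EuclideanSpace ℝ (Fin d)

include hnf

theorem dist_map (i : Fin N) (x y : E) : dist (ψ i x) (ψ i y) = β⁻¹ * dist x y := by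
  obtain ⟨U, γ, hU⟩ := hnf.similitude i
  have hβ : 0 < β⁻¹ := inv_pos.mpr (zero_lt_one.trans hnf.beta_gt_one)
  rw [hU, hU, dist_add_right, dist_smul₀, Real.norm_of_nonneg hβ.le, U.dist_map]

theorem contractingWith (i : Fin N) : ContractingWith (Real.toNNReal β⁻¹) (ψ i) := by
  have hβ : 0 ≤ β⁻¹ := inv_nonneg.mpr (zero_le_one.trans hnf.beta_gt_one.le)
  refine ⟨by simpa using inv_lt_one_of_one_lt₀ hnf.beta_gt_one, .of_dist_le_mul fun x y => ?_⟩
  rw [Real.coe_toNNReal _ hβ, hnf.dist_map]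

theorem injective (i : Fin N) : Injective (ψ i) := fun x y h => by
  have := hnf.dist_map i x y
  rw [h, dist_self, eq_comm, mul_eq_zero, inv_eq_zero] at this
  exact dist_eq_zero.mp (this.resolve_left (zero_lt_one.trans hnf.beta_gt_one).ne')

theorem mapsTo (i : Fin N) : Set.MapsTo (ψ i) F F := fun x hx => by
  rw [hnf.F_invariant]
  exact Set.mem_iUnion.mpr ⟨i, x, hx, rfl⟩

theorem one_lt_N : 1 < N := by
  obtain ⟨x, ⟨-, i, j, hij, -⟩, -⟩ := hnf.v0_nontrivial
  simpa using Fintype.one_lt_card_iff_nontrivial.mpr ⟨i, j, hij⟩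

theorem neZero : NeZero N := ⟨(zero_lt_one.trans hnf.one_lt_N).ne'⟩

def contMap (i : Fin N) : C(E, E) := ⟨ψ i, (hnf.contractingWith i).2.continuous⟩

@[simp]
theorem contMap_apply (i : Fin N) (x : E) : hnf.contMap i x = ψ i x := rfl

theorem essFixPts_subset : essFixPts ψ ⊆ F := by
  rintro x ⟨⟨i, hi⟩, -⟩
  obtain ⟨y, hy⟩ := hnf.F_nonempty
  rw [(hnf.contractingWith i).fixedPoint_unique hi]
  exact hnf.F_compact.isClosed.mem_of_tendsto ((hnf.contractingWith i).tendsto_iterate_fixedPoint y)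
    (.of_forall fun n => (hnf.mapsTo i).iterate n hy)

theorem essFixPts_finite : (essFixPts ψ).Finite := by
  refine (Set.finite_iUnion fun i => ?_).subset fun x (hx : x ∈ essFixPts ψ) =>
    Set.mem_iUnion.mpr hx.1
  exact Set.Subsingleton.finite fun x hx y hy => (hnf.contractingWith i).fixedPoint_unique' hx hy

theorem Vseq_subset (n : ℕ) : Vseq ψ n ⊆ F := by
  induction n with
  | zero => exact hnf.essFixPts_subset
  | succ n ih =>
    exact Set.iUnion_subset fun i => Set.image_subset_iff.mpr ((hnf.mapsTo i).mono_left ih)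

theorem Vseq_finite (n : ℕ) : (Vseq ψ n).Finite := by
  induction n with
  | zero => exact hnf.essFixPts_finite
  | succ n ih => exact Set.finite_iUnion fun i => ih.image _

theorem image_inter_image_Vseq_subset {i j : Fin N} (hij : i ≠ j) (n : ℕ) :
    ψ i '' Vseq ψ n ∩ ψ j '' Vseq ψ n ⊆ Vseq ψ 1 := by
  have h := hnf.nesting 1 le_rfl [i] [j] rfl rfl (by simpa using hij)
  simp only [psiWord, comp_id] at h
  calc ψ i '' Vseq ψ n ∩ ψ j '' Vseq ψ n ⊆ ψ i '' F ∩ ψ j '' F :=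
        Set.inter_subset_inter (Set.image_mono (hnf.Vseq_subset n))
          (Set.image_mono (hnf.Vseq_subset n))
    _ ⊆ ψ i '' essFixPts ψ := h ▸ Set.inter_subset_left
    _ ⊆ Vseq ψ 1 := Set.subset_iUnion (fun i => ψ i '' essFixPts ψ) i

theorem dist_iterate (i : Fin N) (n : ℕ) (x y : E) :
    dist ((ψ i)^[n] x) ((ψ i)^[n] y) = β⁻¹ ^ n * dist x y := by
  induction n with
  | zero => simp
  | succ n ih => rw [iterate_succ_apply', iterate_succ_apply', hnf.dist_map, ih, pow_succ']; ring

noncomputable def vertices (n : ℕ) : Finset E := (hnf.Vseq_finite n).toFinset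

@[simp]
theorem mem_vertices {n : ℕ} {x : E} : x ∈ hnf.vertices n ↔ x ∈ Vseq ψ n :=
  Set.Finite.mem_toFinset _

@[simp]
theorem coe_vertices (n : ℕ) : (hnf.vertices n : Set E) = Vseq ψ n :=
  Set.Finite.coe_toFinset _

theorem vertices_succ (n : ℕ) :
    hnf.vertices (n + 1) = univ.biUnion fun i => (hnf.vertices n).image (ψ i) := by
  apply Finset.coe_injective
  simp [Vseq]

/-- The orbit of one essential fixed point under the map fixing another one runs through
`n + 1` distinct points of `V_n`. -/
theorem le_card_vertices (n : ℕ) : n + 1 ≤ #(hnf.vertices n) := by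
  obtain ⟨x, hx, y, hy, hxy⟩ := hnf.v0_nontrivial
  obtain ⟨a, ha⟩ := hx.1
  set q : ℕ → E := fun j => (ψ a)^[j] y
  have hq_mem : ∀ j, q j ∈ Vseq ψ j := by
    intro j
    induction j with
    | zero => exact hy
    | succ j ih =>
      simp only [q, iterate_succ_apply']
      exact Set.mem_iUnion.mpr ⟨a, _, ih, rfl⟩
  have hq_dist : ∀ j, dist (q j) x = β⁻¹ ^ j * dist y x := fun j => by
    conv_lhs => rw [← (IsFixedPt.iterate ha j).eq]
    exact hnf.dist_iterate a j y x
  have hβ : β⁻¹ < 1 := inv_lt_one_of_one_lt₀ hnf.beta_gt_one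
  have hq_inj : Injective q := fun j k hjk => by
    have h := congrArg (dist · x) hjk
    simp only [hq_dist] at h
    exact pow_right_injective₀ (inv_pos.mpr (zero_lt_one.trans hnf.beta_gt_one)) hβ.ne
      (mul_right_cancel₀ (dist_ne_zero.mpr (Ne.symm hxy)) h)
  calc n + 1 = #((range (n + 1)).image q) := by rw [card_image_of_injective _ hq_inj, card_range]
    _ ≤ #(hnf.vertices n) := card_le_card fun z hz => by
        obtain ⟨j, hj, rfl⟩ := mem_image.mp hz
        exact hnf.mem_vertices.mpr (Vseq_mono ψ (Nat.lt_succ_iff.mp (mem_range.mp hj)) (hq_mem j))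

theorem abs_sum_sum_vertices_sub_le (n : ℕ) (f : E → ℝ) :
    |∑ i, ∑ x ∈ hnf.vertices n, f (ψ i x) - ∑ x ∈ hnf.vertices (n + 1), f x| ≤
      (N - 1) * ∑ b ∈ hnf.vertices 1, |f b| := by
  have := hnf.neZero
  have himage : ∀ i, ∑ x ∈ hnf.vertices n, f (ψ i x) = ∑ y ∈ (hnf.vertices n).image (ψ i), f y :=
    fun i => (sum_image fun x _ y _ h => hnf.injective i h).symm
  simp only [himage, hnf.vertices_succ n]
  simpa using Finset.abs_sum_sum_sub_sum_biUnion_le (fun i => (hnf.vertices n).image (ψ i))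
    (fun i j hij => by simpa [← coe_subset] using hnf.image_inter_image_Vseq_subset hij n) f

/-- The integral of `f` against the rescaled counting measure `N⁻ⁿ μ_n`. -/
noncomputable def normalizedVertexSum (n : ℕ) (f : E → ℝ) : ℝ :=
  (N : ℝ)⁻¹ ^ n * ∑ x ∈ hnf.vertices n, f x

theorem normalizedVertexSum_one (n : ℕ) :
    hnf.normalizedVertexSum n 1 = (N : ℝ)⁻¹ ^ n * #(hnf.vertices n) := by
  simp [normalizedVertexSum]

theorem abs_normalizedVertexSum_succ_sub_le (n : ℕ) (f : E →ᵇ ℝ) :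
    |hnf.normalizedVertexSum (n + 1) f - hnf.normalizedVertexSum n (ifsAverage hnf.contMap f)| ≤
      ((N : ℝ)⁻¹ ^ n - (N : ℝ)⁻¹ ^ (n + 1)) * #(hnf.vertices 1) * ‖f‖ := by
  have hN : (1 : ℝ) < N := by exact_mod_cast hnf.one_lt_N
  have hdiff : hnf.normalizedVertexSum (n + 1) f -
      hnf.normalizedVertexSum n (ifsAverage hnf.contMap f) = (N : ℝ)⁻¹ ^ (n + 1) *
        (∑ x ∈ hnf.vertices (n + 1), f x - ∑ i, ∑ x ∈ hnf.vertices n, f (ψ i x)) := by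
    simp only [normalizedVertexSum, ifsAverage_apply, contMap_apply, ← mul_sum]
    rw [sum_comm, pow_succ]
    ring
  have hsum : ∑ b ∈ hnf.vertices 1, |f b| ≤ #(hnf.vertices 1) * ‖f‖ := by
    simpa using sum_le_sum fun b (_ : b ∈ hnf.vertices 1) => f.norm_coe_le_norm b
  have hpow : (N : ℝ)⁻¹ ^ n - (N : ℝ)⁻¹ ^ (n + 1) = (N : ℝ)⁻¹ ^ (n + 1) * (N - 1) := by
    rw [pow_succ]
    field_simp
  rw [hdiff, abs_mul, abs_sub_comm, abs_of_pos (by positivity), hpow, mul_assoc, mul_assoc]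
  gcongr
  exact (hnf.abs_sum_sum_vertices_sub_le n f).trans (by gcongr)

theorem abs_normalizedVertexSum_add_sub_le (k m : ℕ) (f : E →ᵇ ℝ) :
    |hnf.normalizedVertexSum (k + m) f -
        hnf.normalizedVertexSum k ((ifsAverage hnf.contMap)^[m] f)| ≤
      ((N : ℝ)⁻¹ ^ k - (N : ℝ)⁻¹ ^ (k + m)) * #(hnf.vertices 1) * ‖f‖ := by
  induction m generalizing f with
  | zero => simp
  | succ m ih =>
    have hN : (1 : ℝ) ≤ N := by exact_mod_cast hnf.one_lt_N.le
    have hpow : (N : ℝ)⁻¹ ^ (k + m) ≤ (N : ℝ)⁻¹ ^ k :=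
      pow_le_pow_of_le_one (by positivity) (inv_le_one_of_one_le₀ hN) (Nat.le_add_right k m)
    rw [iterate_succ_apply, ← add_assoc]
    calc _ ≤ |hnf.normalizedVertexSum (k + m + 1) f -
            hnf.normalizedVertexSum (k + m) (ifsAverage hnf.contMap f)| +
          |hnf.normalizedVertexSum (k + m) (ifsAverage hnf.contMap f) -
            hnf.normalizedVertexSum k ((ifsAverage hnf.contMap)^[m] (ifsAverage hnf.contMap f))| :=
          abs_sub_le _ _ _
      _ ≤ ((N : ℝ)⁻¹ ^ (k + m) - (N : ℝ)⁻¹ ^ (k + m + 1)) * #(hnf.vertices 1) * ‖f‖ +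
          ((N : ℝ)⁻¹ ^ k - (N : ℝ)⁻¹ ^ (k + m)) * #(hnf.vertices 1) *
            ‖ifsAverage hnf.contMap f‖ :=
          add_le_add (hnf.abs_normalizedVertexSum_succ_sub_le _ f) (ih _)
      _ ≤ ((N : ℝ)⁻¹ ^ (k + m) - (N : ℝ)⁻¹ ^ (k + m + 1)) * #(hnf.vertices 1) * ‖f‖ +
          ((N : ℝ)⁻¹ ^ k - (N : ℝ)⁻¹ ^ (k + m)) * #(hnf.vertices 1) * ‖f‖ := by
          have := sub_nonneg.mpr hpow
          gcongr
          exact norm_ifsAverage_le f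
      _ = _ := by ring

theorem exists_tendsto_normalizedVertexSum_one :
    ∃ c, 0 < c ∧ Tendsto (fun n => hnf.normalizedVertexSum n 1) atTop (𝓝 c) := by
  have hN : (1 : ℝ) < N := by exact_mod_cast hnf.one_lt_N
  have hanti : Antitone fun n => hnf.normalizedVertexSum n 1 := by
    refine antitone_nat_of_succ_le fun n => ?_
    have hcard : #(hnf.vertices (n + 1)) ≤ N * #(hnf.vertices n) :=
      calc #(hnf.vertices (n + 1)) ≤ ∑ i, #((hnf.vertices n).image (ψ i)) := by
            rw [hnf.vertices_succ]
            exact card_biUnion_le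
        _ ≤ ∑ _i : Fin N, #(hnf.vertices n) := sum_le_sum fun _ _ => card_image_le
        _ = N * #(hnf.vertices n) := by simp
    rw [normalizedVertexSum_one, normalizedVertexSum_one, pow_succ, mul_assoc]
    calc (N : ℝ)⁻¹ ^ n * ((N : ℝ)⁻¹ * #(hnf.vertices (n + 1)))
        ≤ (N : ℝ)⁻¹ ^ n * ((N : ℝ)⁻¹ * (N * #(hnf.vertices n))) := by gcongr; exact_mod_cast hcard
      _ = (N : ℝ)⁻¹ ^ n * #(hnf.vertices n) := by field_simp
  have hlim := tendsto_atTop_ciInf hanti ⟨0, by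
    rintro _ ⟨n, rfl⟩
    simp only [normalizedVertexSum_one]
    positivity⟩
  refine ⟨_, ?_, hlim⟩
  -- level `n + 1` loses at most `(N⁻ⁿ - N⁻ⁿ⁻¹) |V_1|` of mass, so this lower bound increases
  set b : ℕ := #(hnf.vertices 1)
  have hmono : Monotone fun n => hnf.normalizedVertexSum n 1 - (N : ℝ)⁻¹ ^ n * b := by
    refine monotone_nat_of_le_succ fun n => ?_
    have h := le_of_abs_le (hnf.abs_sum_sum_vertices_sub_le n 1)
    simp only [Pi.one_apply, sum_const, card_univ, Fintype.card_fin, nsmul_eq_mul, mul_one,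
      abs_one] at h
    simp only [normalizedVertexSum_one, pow_succ]
    rw [← sub_nonneg]
    have hr : (N : ℝ)⁻¹ ^ n * (N : ℝ)⁻¹ * (N : ℝ) = (N : ℝ)⁻¹ ^ n := by field_simp
    nlinarith [pow_pos (inv_pos.mpr (zero_lt_one.trans hN)) n, inv_pos.mpr (zero_lt_one.trans hN)]
  have hlim' : Tendsto (fun n => hnf.normalizedVertexSum n 1 - (N : ℝ)⁻¹ ^ n * b) atTop
      (𝓝 (⨅ n, hnf.normalizedVertexSum n 1)) := by
    simpa using hlim.sub ((tendsto_pow_atTop_nhds_zero_of_lt_one (by positivity)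
      (inv_lt_one_of_one_lt₀ hN)).mul_const (b : ℝ))
  calc 0 < hnf.normalizedVertexSum b 1 - (N : ℝ)⁻¹ ^ b * b := by
        have : (b : ℝ) + 1 ≤ #(hnf.vertices b) := by exact_mod_cast hnf.le_card_vertices b
        rw [normalizedVertexSum_one, ← mul_sub]
        exact mul_pos (by positivity) (by linarith)
    _ ≤ _ := hmono.ge_of_tendsto hlim' b

theorem abs_normalizedVertexSum_sub_mul_le {g : E → ℝ} {t η : ℝ} (h : ∀ x ∈ F, |g x - t| ≤ η)
    (n : ℕ) :
    |hnf.normalizedVertexSum n g - hnf.normalizedVertexSum n 1 * t| ≤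
      hnf.normalizedVertexSum n 1 * η := by
  have hdiff : hnf.normalizedVertexSum n g - hnf.normalizedVertexSum n 1 * t =
      (N : ℝ)⁻¹ ^ n * ∑ x ∈ hnf.vertices n, (g x - t) := by
    simp [normalizedVertexSum, sum_sub_distrib, mul_sub, mul_assoc]
  rw [hdiff, normalizedVertexSum_one, abs_mul, abs_of_nonneg (by positivity), mul_assoc]
  gcongr
  calc |∑ x ∈ hnf.vertices n, (g x - t)| ≤ ∑ x ∈ hnf.vertices n, |g x - t| := abs_sum_le_sum_abs _ _
    _ ≤ ∑ _x ∈ hnf.vertices n, η :=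
        sum_le_sum fun x hx => h x (hnf.Vseq_subset n (hnf.mem_vertices.mp hx))
    _ = #(hnf.vertices n) * η := by rw [sum_const, nsmul_eq_mul]

theorem abs_normalizedVertexSum_add_sub_mul_le {f : E →ᵇ ℝ} {m : ℕ} {t η : ℝ}
    (h : ∀ x ∈ F, |(ifsAverage hnf.contMap)^[m] f x - t| ≤ η) (c : ℝ) (k : ℕ) :
    |hnf.normalizedVertexSum (k + m) f - c * t| ≤ (N : ℝ)⁻¹ ^ k * #(hnf.vertices 1) * ‖f‖ +
      hnf.normalizedVertexSum k 1 * η + |hnf.normalizedVertexSum k 1 - c| * |t| := by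
  have h₁ := hnf.abs_normalizedVertexSum_add_sub_le k m f
  have h₂ := hnf.abs_normalizedVertexSum_sub_mul_le h k
  have h₁' : ((N : ℝ)⁻¹ ^ k - (N : ℝ)⁻¹ ^ (k + m)) * #(hnf.vertices 1) * ‖f‖ ≤
      (N : ℝ)⁻¹ ^ k * #(hnf.vertices 1) * ‖f‖ := by
    gcongr
    exact sub_le_self _ (by positivity)
  calc |hnf.normalizedVertexSum (k + m) f - c * t|
      = |(hnf.normalizedVertexSum (k + m) f -
            hnf.normalizedVertexSum k ((ifsAverage hnf.contMap)^[m] f)) +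
          (hnf.normalizedVertexSum k ((ifsAverage hnf.contMap)^[m] f) -
            hnf.normalizedVertexSum k 1 * t) +
          (hnf.normalizedVertexSum k 1 - c) * t| := by ring_nf
    _ ≤ _ := by
      rw [← abs_mul]
      refine (abs_add_le _ _).trans (add_le_add ((abs_add_le _ _).trans ?_) le_rfl)
      exact add_le_add (h₁.trans h₁') h₂

theorem tendsto_normalizedVertexSum {μ : Measure E} [IsProbabilityMeasure μ] (hμF : μ Fᶜ = 0)
    (hμ : μ = (N : ℝ≥0∞)⁻¹ • ∑ i, μ.map (ψ i)) {c : ℝ}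
    (hc : Tendsto (fun n => hnf.normalizedVertexSum n 1) atTop (𝓝 c)) (f : E →ᵇ ℝ) :
    Tendsto (fun n => hnf.normalizedVertexSum n f) atTop (𝓝 (c * ∫ x, f x ∂μ)) := by
  have := hnf.neZero
  have hr : Tendsto (fun k => (N : ℝ)⁻¹ ^ k) atTop (𝓝 0) :=
    tendsto_pow_atTop_nhds_zero_of_lt_one (by positivity)
      (inv_lt_one_of_one_lt₀ (by exact_mod_cast hnf.one_lt_N))
  rw [Metric.tendsto_nhds]
  intro ε hε
  set η := ε / (|c| + 1)
  have hη : 0 < η := by positivity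
  have hcη : c * η < ε := calc
    c * η ≤ |c| * η := by gcongr; exact le_abs_self c
    _ < (|c| + 1) * η := by linarith
    _ = ε := mul_div_cancel₀ ε (by positivity)
  obtain ⟨m, hm⟩ := (Metric.tendstoUniformlyOn_iff.mp (tendstoUniformlyOn_iterate_ifsAverage
    (ψ := hnf.contMap) (hnf.contractingWith 0).1 (fun i => (hnf.contractingWith i).2)
    hnf.F_compact hnf.mapsTo hμF hμ f) η hη).exists
  have hclose : ∀ x ∈ F, |(ifsAverage hnf.contMap)^[m] f x - ∫ x, f x ∂μ| ≤ η :=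
    fun x hx => by simpa [Real.dist_eq, abs_sub_comm] using (hm x hx).le
  have hbound : Tendsto (fun k => (N : ℝ)⁻¹ ^ k * #(hnf.vertices 1) * ‖f‖ +
      hnf.normalizedVertexSum k 1 * η + |hnf.normalizedVertexSum k 1 - c| * |∫ x, f x ∂μ|)
      atTop (𝓝 (c * η)) := by
    simpa using ((hr.mul_const _).mul_const _).add (hc.mul_const η) |>.add
      ((hc.sub_const c).abs.mul_const _)
  have hev : ∀ᶠ k in atTop, dist (hnf.normalizedVertexSum (k + m) f) (c * ∫ x, f x ∂μ) < ε :=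
    (hbound.eventually (gt_mem_nhds hcη)).mono fun k hk =>
      (hnf.abs_normalizedVertexSum_add_sub_mul_le hclose c k).trans_lt hk
  filter_upwards [(tendsto_sub_atTop_nat m).eventually hev, eventually_ge_atTop m] with n hn hnm
  rwa [Nat.sub_add_cancel hnm] at hn

end IsNestedFractal

/-- convergence of the rescaled counting measures: letting
`μ_n := Σ_{x ∈ V_n} δ_x` denote the counting measure on the vertex set `V_n`, there exists a
constant `c_μ ∈ (0,∞)` such that the finite measures `c_μ⁻¹ N^{-n} μ_n` on `ℝ^d` converge
weakly, as `n → ∞`, to the self-similar probability measure `μ` on `F` (weak convergence being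
tested against bounded continuous functions). -/
theorem counting_measures_converge_weakly
    {d N : ℕ} (β : ℝ)
    (ψ : Fin N → EuclideanSpace ℝ (Fin d) → EuclideanSpace ℝ (Fin d))
    (F : Set (EuclideanSpace ℝ (Fin d)))
    (hnf : IsNestedFractal β ψ F)
    (μ : Measure (EuclideanSpace ℝ (Fin d))) [IsProbabilityMeasure μ]
    (hμsupp : μ Fᶜ = 0)
    (hμss : μ = (N : ℝ≥0∞)⁻¹ • ∑ i, Measure.map (ψ i) μ) :
    ∃ cμ : ℝ, 0 < cμ ∧
      ∀ f : BoundedContinuousFunction (EuclideanSpace ℝ (Fin d)) ℝ,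
        Tendsto
          (fun n : ℕ => ∫ x, f x ∂((ENNReal.ofReal (cμ⁻¹ * ((N : ℝ) ^ n)⁻¹)) •
            Measure.sum (fun x : (Vseq ψ n) => Measure.dirac (x : EuclideanSpace ℝ (Fin d)))))
          atTop (nhds (∫ x, f x ∂μ)) := by
  obtain ⟨c, hc, hlim⟩ := hnf.exists_tendsto_normalizedVertexSum_one
  refine ⟨c, hc, fun f => ?_⟩
  have h := (hnf.tendsto_normalizedVertexSum hμsupp hμss hlim f).const_mul c⁻¹
  rw [inv_mul_cancel_left₀ hc.ne'] at h
  refine h.congr fun n => ?_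
  rw [← hnf.coe_vertices n, integral_smul_measure, integral_sum_dirac_finset,
    ENNReal.toReal_ofReal (by positivity), IsNestedFractal.normalizedVertexSum, inv_pow,
    smul_eq_mul, mul_assoc]
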